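/- Rotation equivariance of consistent load currents. Fix ω0 ∈ ℝ with ω0 ≠ 0 and let i_l : ℝ² → ℝ² be continuously differentiable. Suppose that for every w0 ∈ ℝ² the curve t ↦ i_l(R(ω0 t)·w0) satisfies d/dt i_l(R(ω0 t)·w0) = ω0·j·i_l(R(ω0 t)·w0) for all t ∈ ℝ. Then i_l is rotation equivariant: i_l(R(φ)·w) = R(φ)·i_l(w) for all φ ∈ ℝ and w ∈ ℝ². -/

import Mathlib

noncomputable section
open Matrix

/-- Vectors in ℝ². -/
abbrev V2 : Type := Fin 2 → ℝ
/-- 2×2 real matrices. -/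
abbrev M2 : Type := Matrix (Fin 2) (Fin 2) ℝ

/-- The 90° rotation matrix `j`. -/
def j2 : M2 := !![0, -1; 1, 0]

/-- The rotation matrix `R(θ)`. -/
def Rot (θ : ℝ) : M2 := !![Real.cos θ, -Real.sin θ; Real.sin θ, Real.cos θ]

/-- The unit vector `r(θ) = (cos θ, sin θ)`. -/
def rvec (θ : ℝ) : V2 := ![Real.cos θ, Real.sin θ]

/-- The Euclidean norm on ℝ². -/
def enorm2 (w : V2) : ℝ := Real.sqrt (w 0 ^ 2 + w 1 ^ 2)

/-! Along each orbit, `g t = i_l (R(ω₀ t) w)` and `t ↦ R(ω₀ t) i_l(w)` both solve the linear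
ODE `x' = ω₀ j x` (because `R' = j R`) and agree at `t = 0`, so they coincide by uniqueness of
solutions, the right-hand side being linear and hence Lipschitz. As `ω₀ ≠ 0`, every angle `φ`
is of the form `ω₀ t`. -/

lemma Rot_zero : Rot 0 = 1 := by
  ext i k
  fin_cases i <;> fin_cases k <;> simp [Rot]

lemma hasDerivAt_Rot_mulVec (v : V2) (θ : ℝ) :
    HasDerivAt (fun θ => Rot θ *ᵥ v) (j2 *ᵥ (Rot θ *ᵥ v)) θ := by
  refine hasDerivAt_pi.2 fun i => ?_
  fin_cases i
  · convert ((Real.hasDerivAt_cos θ).mul_const (v 0)).fun_add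
      ((Real.hasDerivAt_sin θ).neg.mul_const (v 1)) using 1 <;>
      simp [Rot, j2, mulVec, dotProduct, Fin.sum_univ_two, add_comm]
  · convert ((Real.hasDerivAt_sin θ).mul_const (v 0)).fun_add
      ((Real.hasDerivAt_cos θ).mul_const (v 1)) using 1 <;>
      simp [Rot, j2, mulVec, dotProduct, Fin.sum_univ_two]

lemma lipschitzWith_smul_j2_mulVec (ω : ℝ) :
    ∃ K, LipschitzWith K fun x : V2 => ω • (j2 *ᵥ x) :=
  ⟨_, (LinearMap.toContinuousLinearMap (ω • j2.mulVecLin)).lipschitz⟩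

theorem eq_Rot_mulVec_of_hasDerivAt {ω : ℝ} {g : ℝ → V2}
    (hg : ∀ t, HasDerivAt g (ω • (j2 *ᵥ g t)) t) (t : ℝ) :
    g t = Rot (ω * t) *ᵥ g 0 := by
  obtain ⟨K, hK⟩ := lipschitzWith_smul_j2_mulVec ω
  have hrot (s : ℝ) :
      HasDerivAt (fun s => Rot (ω * s) *ᵥ g 0) (ω • (j2 *ᵥ (Rot (ω * s) *ᵥ g 0))) s :=
    (hasDerivAt_Rot_mulVec (g 0) (ω * s)).scomp s (hasDerivAt_const_mul ω)
  have hunique := ODE_solution_unique_univ (v := fun _ x => ω • (j2 *ᵥ x))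
    (s := fun _ => Set.univ) (t₀ := 0) (fun _ => hK.lipschitzOnWith)
    (fun s => ⟨hg s, trivial⟩) (fun s => ⟨hrot s, trivial⟩) (by simp [Rot_zero])
  exact congrFun hunique t

theorem consistent_load_equivariant_general (ω0 : ℝ) (hω0 : ω0 ≠ 0) (il : V2 → V2)
    (hcurve : ∀ (w0 : V2) (t : ℝ),
      HasDerivAt (fun s => il (Rot (ω0 * s) *ᵥ w0))
        (ω0 • (j2 *ᵥ il (Rot (ω0 * t) *ᵥ w0))) t) :
    ∀ (φ : ℝ) (w : V2), il (Rot φ *ᵥ w) = Rot φ *ᵥ il w := by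
  intro φ w
  simpa [mul_div_cancel₀ φ hω0, Rot_zero] using eq_Rot_mulVec_of_hasDerivAt (hcurve w) (φ / ω0)

/-- Rotation equivariance of consistent load currents: if a C¹ map
i_l : ℝ² → ℝ² satisfies d/dt i_l(R(ω₀t)w₀) = ω₀ j i_l(R(ω₀t)w₀) along every
synchronous trajectory (ω₀ ≠ 0), then i_l(R(φ)w) = R(φ) i_l(w) for all φ, w. -/
theorem consistent_load_equivariant (ω0 : ℝ) (hω0 : ω0 ≠ 0) (il : V2 → V2)
    (hil : ContDiff ℝ 1 il)
    (hcurve : ∀ (w0 : V2) (t : ℝ),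
      HasDerivAt (fun s => il (Rot (ω0 * s) *ᵥ w0))
        (ω0 • (j2 *ᵥ il (Rot (ω0 * t) *ᵥ w0))) t) :
    ∀ (φ : ℝ) (w : V2), il (Rot φ *ᵥ w) = Rot φ *ᵥ il w :=
  consistent_load_equivariant_general ω0 hω0 il hcurve
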